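/- (Exactness of the feedback particle filter, deterministic coefficient form.) Let p : ℝ^d → (0,∞) be twice continuously differentiable, let h : ℝ^d → ℝ be twice continuously differentiable, let ĥ ∈ ℝ, and let K : ℝ^d → ℝ^d be twice continuously differentiable with ∇·(pK) = −(h − ĥ) p pointwise. With Ω_l = (1/2) Σ_k K_k ∂K_l/∂x_k and u = −(1/2) K (h + ĥ) + Ω, for every a ∈ ℝ and every x ∈ ℝ^d the following identity holds: −∇·(pK)(x) · a − ∇·(pu)(x) + (1/2) Σ_{l,k=1}^d ∂²( p K_l K_k )/∂x_l ∂x_k (x) = ( h(x) − ĥ )( a − ĥ ) p(x). That is, the coefficients (in the observation increment a and in time) of the forward equation of the controlled particle system coincide exactly with the coefficients of the Kushner–Stratonovich equation dp* = (h − ĥ)(dZ_t − ĥ dt) p*. -/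

import Mathlib

open MeasureTheory Real

/-- Divergence `∇·V = ∑_j ∂V_j/∂x_j` of a vector field on `ℝ^d`. -/
noncomputable def diverg {d : ℕ}
    (V : EuclideanSpace ℝ (Fin d) → EuclideanSpace ℝ (Fin d))
    (x : EuclideanSpace ℝ (Fin d)) : ℝ :=
  ∑ j, fderiv ℝ (fun y => V y j) x (EuclideanSpace.single j 1)

/-- Second partial derivative `∂²f/∂x_l ∂x_k` of a scalar field on `ℝ^d`. -/
noncomputable def secondPartial {d : ℕ} (f : EuclideanSpace ℝ (Fin d) → ℝ)
    (x : EuclideanSpace ℝ (Fin d)) (l k : Fin d) : ℝ :=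
  fderiv ℝ (fun y => fderiv ℝ f y (EuclideanSpace.single k 1)) x (EuclideanSpace.single l 1)

/-! The row-wise divergence `R = ∇·(p K ⊗ K)` satisfies `R = -(h - ĥ) p K + 2 p Ω` by the
product rule and the gain equation, so `p u = ½ R - ĥ p K`. Since the second-order term is
`½ ∇·R`, the drift and diffusion terms cancel up to `ĥ ∇·(pK)`, leaving
`-∇·(pK) (a - ĥ) = (h - ĥ)(a - ĥ) p`. -/

theorem EuclideanSpace.map_eq_sum_smul {ι M : Type*} [Fintype ι] [DecidableEq ι]
    [AddCommGroup M] [Module ℝ M] [TopologicalSpace M]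
    (L : EuclideanSpace ℝ ι →L[ℝ] M) (v : EuclideanSpace ℝ ι) :
    L v = ∑ j, v j • L (EuclideanSpace.single j 1) := by
  conv_lhs => rw [← (EuclideanSpace.basisFun ι ℝ).sum_repr v]
  simp [map_sum]

section Divergence

variable {d : ℕ} {V W : EuclideanSpace ℝ (Fin d) → EuclideanSpace ℝ (Fin d)}
  {x : EuclideanSpace ℝ (Fin d)}

theorem diverg_smul_add_smul (a b : ℝ) (hV : DifferentiableAt ℝ V x)
    (hW : DifferentiableAt ℝ W x) :
    diverg (fun y => a • V y + b • W y) x = a * diverg V x + b * diverg W x := by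
  simp only [diverg, Finset.mul_sum, ← Finset.sum_add_distrib]
  refine Finset.sum_congr rfl fun j _ => ?_
  have hVj := differentiableAt_euclidean.mp hV j
  have hWj := differentiableAt_euclidean.mp hW j
  change fderiv ℝ (fun y => a * V y j + b * W y j) x _ = _
  rw [fderiv_fun_add (hVj.const_mul a) (hWj.const_mul b), fderiv_const_mul hVj,
    fderiv_const_mul hWj]
  rfl

theorem diverg_smul {f : EuclideanSpace ℝ (Fin d) → ℝ} (hf : DifferentiableAt ℝ f x)
    (hV : DifferentiableAt ℝ V x) :
    diverg (fun y => f y • V y) x = f x * diverg V x + fderiv ℝ f x (V x) := by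
  rw [EuclideanSpace.map_eq_sum_smul (fderiv ℝ f x), diverg, diverg, Finset.mul_sum,
    ← Finset.sum_add_distrib]
  refine Finset.sum_congr rfl fun j _ => ?_
  change fderiv ℝ (fun y => f y * V y j) x _ = _
  rw [fderiv_fun_mul hf (differentiableAt_euclidean.mp hV j)]
  simp only [add_apply, smul_apply, smul_eq_mul]

theorem ContDiff.differentiable_fderiv_apply {f : EuclideanSpace ℝ (Fin d) → ℝ}
    (hf : ContDiff ℝ 2 f) (v : EuclideanSpace ℝ (Fin d)) :
    Differentiable ℝ fun y => fderiv ℝ f y v :=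
  ((hf.fderiv_right (by norm_num)).clm_apply contDiff_const).differentiable one_ne_zero

theorem ContDiff.differentiable_diverg (hV : ContDiff ℝ 2 V) : Differentiable ℝ (diverg V) := by
  unfold diverg
  exact Differentiable.fun_sum fun j _ =>
    (contDiff_euclidean.mp hV j).differentiable_fderiv_apply _

theorem sum_secondPartial_eq_diverg_diverg
    {G : Fin d → EuclideanSpace ℝ (Fin d) → EuclideanSpace ℝ (Fin d)}
    (hG : ∀ l, ContDiff ℝ 2 (G l)) (x : EuclideanSpace ℝ (Fin d)) :
    ∑ l, ∑ k, secondPartial (fun y => G l y k) x l k =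
      diverg (fun y => WithLp.toLp 2 fun l => diverg (G l) y) x := by
  refine Finset.sum_congr rfl fun l _ => ?_
  change _ = fderiv ℝ
    (fun y => ∑ k, fderiv ℝ (fun z => G l z k) y (EuclideanSpace.single k 1))
    x (EuclideanSpace.single l 1)
  rw [fderiv_fun_sum fun k _ =>
    ((contDiff_euclidean.mp (hG l) k).differentiable_fderiv_apply _).differentiableAt, sum_apply]
  rfl

end Divergence

section FeedbackParticleFilter

variable {d : ℕ} {p h : EuclideanSpace ℝ (Fin d) → ℝ} {hhat : ℝ}
  {K Ω u : EuclideanSpace ℝ (Fin d) → EuclideanSpace ℝ (Fin d)}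

noncomputable def rowDivergOuter (p : EuclideanSpace ℝ (Fin d) → ℝ)
    (K : EuclideanSpace ℝ (Fin d) → EuclideanSpace ℝ (Fin d))
    (y : EuclideanSpace ℝ (Fin d)) : EuclideanSpace ℝ (Fin d) :=
  WithLp.toLp 2 fun l => diverg (fun z => K z l • (p z • K z)) y

theorem sum_secondPartial_eq_diverg_rowDivergOuter (hp : ContDiff ℝ 2 p) (hK : ContDiff ℝ 2 K)
    (x : EuclideanSpace ℝ (Fin d)) :
    ∑ l, ∑ k, secondPartial (fun y => p y * K y l * K y k) x l k =
      diverg (rowDivergOuter p K) x := by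
  have hG : ∀ l, ContDiff ℝ 2 fun z => K z l • (p z • K z) :=
    fun l => (contDiff_euclidean.mp hK l).smul (hp.smul hK)
  refine .trans ?_ (sum_secondPartial_eq_diverg_diverg hG x)
  congr! 4 with l _ k _ y
  simp only [PiLp.smul_apply, smul_eq_mul]
  ring

theorem smul_control_eq_half_rowDivergOuter (hp : Differentiable ℝ p) (hK : Differentiable ℝ K)
    (hgain : ∀ x, diverg (fun y => p y • K y) x = -(h x - hhat) * p x)
    (hΩ : Ω = fun x => ∑ l, ((1 / 2 : ℝ) *
      ∑ k, K x k * fderiv ℝ (fun y => K y l) x (EuclideanSpace.single k 1)) •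
        EuclideanSpace.single l 1)
    (hu : u = fun x => (-(1 / 2 : ℝ) * (h x + hhat)) • K x + Ω x)
    (y : EuclideanSpace ℝ (Fin d)) :
    p y • u y = (1 / 2 : ℝ) • rowDivergOuter p K y + (-hhat) • (p y • K y) := by
  ext l
  have hΩl : Ω y l = (1 / 2 : ℝ) * fderiv ℝ (fun z => K z l) y (K y) := by
    rw [EuclideanSpace.map_eq_sum_smul, hΩ]
    simp [Pi.single_apply]
  have hrow : rowDivergOuter p K y l =
      K y l * (-(h y - hhat) * p y) + p y * fderiv ℝ (fun z => K z l) y (K y) := by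
    change diverg _ y = _
    rw [diverg_smul (V := fun z => p z • K z) (differentiableAt_euclidean.mp (hK y) l)
      ((hp y).smul (hK y)), hgain y, map_smul, smul_eq_mul]
  simp only [hu, PiLp.add_apply, PiLp.smul_apply, smul_eq_mul, hrow, hΩl]
  ring

end FeedbackParticleFilter

theorem fpf_exactness_coefficients_general
    {d : ℕ} (p h : EuclideanSpace ℝ (Fin d) → ℝ)
    (hp : ContDiff ℝ 2 p) (hhat : ℝ)
    (K : EuclideanSpace ℝ (Fin d) → EuclideanSpace ℝ (Fin d)) (hK : ContDiff ℝ 2 K)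
    (hgain : ∀ x, diverg (fun y => p y • K y) x = -(h x - hhat) * p x)
    (Ω u : EuclideanSpace ℝ (Fin d) → EuclideanSpace ℝ (Fin d))
    (hΩ : Ω = fun x => ∑ l, ((1 / 2 : ℝ) *
      ∑ k, K x k * fderiv ℝ (fun y => K y l) x (EuclideanSpace.single k 1)) •
        EuclideanSpace.single l 1)
    (hu : u = fun x => (-(1 / 2 : ℝ) * (h x + hhat)) • K x + Ω x) :
    ∀ (a : ℝ) (x : EuclideanSpace ℝ (Fin d)),
      -diverg (fun y => p y • K y) x * a - diverg (fun y => p y • u y) x +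
        (1 / 2 : ℝ) * ∑ l, ∑ k, secondPartial (fun y => p y * K y l * K y k) x l k =
      (h x - hhat) * (a - hhat) * p x := by
  intro a x
  have hpK : ContDiff ℝ 2 fun y => p y • K y := hp.smul hK
  have hrow : DifferentiableAt ℝ (rowDivergOuter p K) x :=
    differentiableAt_euclidean.mpr fun l =>
      ((contDiff_euclidean.mp hK l).smul hpK).differentiable_diverg x
  have hpu : (fun y => p y • u y) =
      fun y => (1 / 2 : ℝ) • rowDivergOuter p K y + (-hhat) • (p y • K y) := funext <|
    smul_control_eq_half_rowDivergOuter (hp.differentiable two_ne_zero)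
      (hK.differentiable two_ne_zero) hgain hΩ hu
  rw [hpu, diverg_smul_add_smul _ _ hrow (hpK.differentiable two_ne_zero x),
    sum_secondPartial_eq_diverg_rowDivergOuter hp hK, hgain x]
  ring

/-- **Exactness of the feedback particle filter (deterministic coefficient form).**
Let `p > 0` and `h` be `C²`, `ĥ ∈ ℝ`, and let the `C²` gain `K` solve
`∇·(pK) = -(h - ĥ)p` pointwise.  With `Ω_l = (1/2) ∑_k K_k ∂K_l/∂x_k` and
`u = -(1/2)K(h + ĥ) + Ω`, for every `a ∈ ℝ` and every `x`,
`-∇·(pK) a - ∇·(pu) + (1/2) ∑_{l,k} ∂²(p K_l K_k)/∂x_l∂x_k = (h - ĥ)(a - ĥ) p`;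
i.e. the coefficients of the forward equation of the controlled particle system
coincide with those of the Kushner–Stratonovich equation. -/
theorem fpf_exactness_coefficients
    {d : ℕ} (p h : EuclideanSpace ℝ (Fin d) → ℝ)
    (hp : ContDiff ℝ 2 p) (hppos : ∀ x, 0 < p x)
    (hh : ContDiff ℝ 2 h) (hhat : ℝ)
    (K : EuclideanSpace ℝ (Fin d) → EuclideanSpace ℝ (Fin d)) (hK : ContDiff ℝ 2 K)
    (hgain : ∀ x, diverg (fun y => p y • K y) x = -(h x - hhat) * p x)
    (Ω u : EuclideanSpace ℝ (Fin d) → EuclideanSpace ℝ (Fin d))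
    (hΩ : Ω = fun x => ∑ l, ((1 / 2 : ℝ) *
      ∑ k, K x k * fderiv ℝ (fun y => K y l) x (EuclideanSpace.single k 1)) •
        EuclideanSpace.single l 1)
    (hu : u = fun x => (-(1 / 2 : ℝ) * (h x + hhat)) • K x + Ω x) :
    ∀ (a : ℝ) (x : EuclideanSpace ℝ (Fin d)),
      -diverg (fun y => p y • K y) x * a - diverg (fun y => p y • u y) x +
        (1 / 2 : ℝ) * ∑ l, ∑ k, secondPartial (fun y => p y * K y l * K y k) x l k =
      (h x - hhat) * (a - hhat) * p x :=
  fpf_exactness_coefficients_general p h hp hhat K hK hgain Ω u hΩ hu
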